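/- arXiv:math/0305154 — 3 statements merged into one kernel-verified Lean document; each statement's English description precedes it below -/
import Mathlib

section
/- Let L be a finite meet-semilattice, G a building set of L, x ∈ L \ {0̂}, and F(x) = max G_{≤x} = {x₁,…,x_k} the set of factors of x. Then the set of elementary divisors of x is the disjoint union of the sets of elementary divisors of the factors: D(x) = D(x₁) ⊎ … ⊎ D(x_k). -/
attribute [local instance] Classical.propDecidable

universe u

/-- The set of maximal elements of `G` below `x`. -/
def maxBelow {L : Type u} [PartialOrder L] (G : Set L) (x : L) : Set L :=
  {g | g ∈ G ∧ g ≤ x ∧ ∀ h ∈ G, h ≤ x → g ≤ h → h = g}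

/-- The tuple in the product of lower intervals which is `g` in the coordinate
indexed by `g` and bottom elsewhere. -/
noncomputable def deltaTuple {L : Type u} [PartialOrder L] [OrderBot L] (G : Set L) (x : L)
    (g : maxBelow G x) : (h : maxBelow G x) → Set.Iic (h : L) :=
  fun h => if (h : L) = (g : L) then ⟨(h : L), le_refl _⟩ else ⟨⊥, bot_le⟩

/-- `G` is a (combinatorial) building set: `G` avoids the bottom element, and for every
`x ≠ ⊥` the interval `[⊥, x]` decomposes as the product of the intervals below the maximal
elements of `G` below `x`, via an isomorphism sending delta tuples to the corresponding
maximal elements. -/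
def IsBuilding {L : Type u} [PartialOrder L] [OrderBot L] (G : Set L) : Prop :=
  (∀ g ∈ G, g ≠ ⊥) ∧
  ∀ x : L, x ≠ ⊥ →
    ∃ φ : ((h : maxBelow G x) → Set.Iic (h : L)) ≃o Set.Iic x,
      ∀ g : maxBelow G x, ((φ (deltaTuple G x g) : Set.Iic x) : L) = (g : L)

/-- A poset is irreducible if it is not order-isomorphic to a product of two posets,
each having at least two elements. -/
def IsIrreduciblePoset (P : Type u) [PartialOrder P] : Prop :=
  ¬ ∃ (A : Type u) (B : Type u) (_ : PartialOrder A) (_ : PartialOrder B),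
      Nontrivial A ∧ Nontrivial B ∧ Nonempty (P ≃o A × B)

/-- An element `x` is irreducible if the interval `[⊥, x]` is an irreducible poset. -/
def IsIrredElem {L : Type u} [PartialOrder L] (x : L) : Prop :=
  IsIrreduciblePoset (Set.Iic x)

/-- The set of elementary divisors of `x`: the maximal irreducible elements below `x`. -/
abbrev elemDivisors {L : Type u} [PartialOrder L] (x : L) : Set L :=
  maxBelow {y | IsIrredElem y} x

/-!
Pulling the decomposition `∏ [⊥, g] ≃o [⊥, x]` back to `y ≤ x` exhibits `[⊥, y]` as the
product of the intervals below the coordinates of `y`, so an irreducible `y ≠ ⊥` has a single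
nonzero coordinate, i.e. lies below exactly one factor of `x`. In a finite lattice the
elementary divisors of `x ≠ ⊥` are nonzero, since atoms are irreducible. Hence each lies below
a unique factor `g`, an irreducible element between it and `x` lies below the same `g`, and
being maximal below `x` or below `g` is the same.
-/

namespace OrderIso

variable {α β : Type*}

def restrictIic [Preorder α] [Preorder β] (e : α ≃o β) (a : α) :
    Set.Iic a ≃o Set.Iic (e a) where
  toFun z := ⟨e z, e.monotone z.2⟩
  invFun w := ⟨e.symm w, e.symm_apply_le.mpr w.2⟩
  left_inv z := by simp
  right_inv w := by simp
  map_rel_iff' := e.le_iff_le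

def IicIic [Preorder α] {x y : α} (hy : y ≤ x) :
    Set.Iic (⟨y, hy⟩ : Set.Iic x) ≃o Set.Iic y where
  toFun z := ⟨z.1.1, z.2⟩
  invFun w := ⟨⟨w.1, w.2.trans hy⟩, w.2⟩
  map_rel_iff' := Iff.rfl

def IicPi {ι : Type*} {π : ι → Type*} [∀ i, Preorder (π i)] (f : ∀ i, π i) :
    Set.Iic f ≃o ∀ i, Set.Iic (f i) where
  toFun g i := ⟨g.1 i, g.2 i⟩
  invFun h := ⟨fun i => h i, fun i => (h i).2⟩
  map_rel_iff' := Iff.rfl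

def piSplitAt {ι : Type*} [DecidableEq ι] (i : ι) (π : ι → Type*) [∀ i, Preorder (π i)] :
    (∀ j, π j) ≃o π i × ∀ j : {j // j ≠ i}, π j where
  toEquiv := Equiv.piSplitAt i π
  map_rel_iff' {f g} := by
    refine ⟨fun ⟨hi, hne⟩ j => ?_, fun h => ⟨h i, fun j => h j⟩⟩
    by_cases hj : j = i
    · subst hj; exact hi
    · exact hne ⟨j, hj⟩

end OrderIso

section Irreducible

variable {P Q : Type u} [PartialOrder P] [PartialOrder Q]

theorem IsIrreduciblePoset.of_orderIso (e : P ≃o Q) (hQ : IsIrreduciblePoset Q) :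
    IsIrreduciblePoset P := by
  rintro ⟨A, B, _, _, hA, hB, ⟨f⟩⟩
  exact hQ ⟨A, B, _, _, hA, hB, ⟨e.symm.trans f⟩⟩

theorem IsIrreduciblePoset.of_isSimpleOrder [BoundedOrder P] [IsSimpleOrder P] :
    IsIrreduciblePoset P := by
  rintro ⟨A, B, _, _, ⟨a₁, a₂, ha⟩, ⟨b₁, b₂, hb⟩, ⟨e⟩⟩
  have hinj : Function.Injective fun p => IsSimpleOrder.equivBool (e.symm p) :=
    IsSimpleOrder.equivBool.injective.comp e.symm.injective
  have pigeonhole : ∀ s t r : Bool, s = t ∨ s = r ∨ t = r := by decide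
  rcases pigeonhole (IsSimpleOrder.equivBool (e.symm (a₁, b₁)))
    (IsSimpleOrder.equivBool (e.symm (a₁, b₂))) (IsSimpleOrder.equivBool (e.symm (a₂, b₁)))
    with h | h | h
  · exact hb (congrArg Prod.snd (hinj h))
  · exact ha (congrArg Prod.fst (hinj h))
  · exact ha (congrArg Prod.fst (hinj h))

theorem not_isIrreduciblePoset_pi {ι : Type u} {π : ι → Type u} [∀ i, PartialOrder (π i)]
    [∀ i, Nonempty (π i)] {i j : ι} (hij : i ≠ j) [Nontrivial (π i)] [Nontrivial (π j)] :
    ¬ IsIrreduciblePoset (∀ k, π k) := by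
  have : Nontrivial (∀ k : {k // k ≠ i}, π k) :=
    Pi.nontrivial_at (f := fun k : {k // k ≠ i} => π k) ⟨j, hij.symm⟩
  exact fun h => h ⟨_, _, _, _, inferInstance, this, ⟨OrderIso.piSplitAt i π⟩⟩

theorem IsAtom.isIrredElem {L : Type u} [PartialOrder L] [OrderBot L] {a : L} (ha : IsAtom a) :
    IsIrredElem a :=
  haveI := Set.isSimpleOrder_Iic_iff_isAtom.mpr ha
  IsIrreduciblePoset.of_isSimpleOrder

end Irreducible

theorem Set.Iic.nontrivial_of_ne_bot {α : Type*} [PartialOrder α] [OrderBot α] {a : α}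
    (ha : a ≠ ⊥) : Nontrivial (Set.Iic a) :=
  ⟨⟨⊥, ⊤, fun h => ha (congrArg Subtype.val h).symm⟩⟩

section MaxBelow

variable {L : Type u} [PartialOrder L] {S : Set L} {x y g : L}

theorem mem_maxBelow_of_le (hy : y ∈ maxBelow S x) (hyg : y ≤ g) (hgx : g ≤ x) :
    y ∈ maxBelow S g :=
  ⟨hy.1, hyg, fun h hS hhg hyh => hy.2.2 h hS (hhg.trans hgx) hyh⟩

theorem mem_maxBelow_of_le_of_forall (hy : y ∈ maxBelow S g) (hgx : g ≤ x)
    (hS : ∀ h ∈ S, h ≤ x → y ≤ h → h ≤ g) : y ∈ maxBelow S x :=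
  ⟨hy.1, hy.2.1.trans hgx, fun h hhS hhx hyh => hy.2.2 h hhS (hS h hhS hhx hyh) hyh⟩

theorem ne_bot_of_mem_elemDivisors [OrderBot L] [Finite L] (hx : x ≠ ⊥)
    (hy : y ∈ elemDivisors x) : y ≠ ⊥ := by
  obtain ⟨a, ha, hax⟩ := (eq_bot_or_exists_atom_le x).resolve_left hx
  rintro rfl
  exact ha.1 (hy.2.2 a ha.isIrredElem hax bot_le)

end MaxBelow

section Building

variable {L : Type u} [PartialOrder L] [OrderBot L] {G : Set L} {x y z : L}

theorem deltaTuple_self (g : maxBelow G x) : deltaTuple G x g g = ⊤ :=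
  if_pos rfl

theorem deltaTuple_of_ne {g h : maxBelow G x} (hne : h ≠ g) : deltaTuple G x g h = ⊥ :=
  if_neg (Subtype.val_injective.ne hne)

theorem le_deltaTuple_iff {g : maxBelow G x} {f : ∀ h : maxBelow G x, Set.Iic (h : L)} :
    f ≤ deltaTuple G x g ↔ ∀ h, h ≠ g → f h = ⊥ := by
  refine ⟨fun hf h hne => le_bot_iff.mp ((hf h).trans_eq (deltaTuple_of_ne hne)),
    fun hf h => ?_⟩
  by_cases hhg : h = g
  · subst hhg; exact (deltaTuple_self h).symm ▸ le_top
  · exact (hf h hhg).trans_le bot_le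

variable {φ : ((g : maxBelow G x) → Set.Iic (g : L)) ≃o Set.Iic x}

theorem eq_bot_iff_forall_symm_apply_eq_bot (hy : y ≤ x) :
    y = ⊥ ↔ ∀ g, φ.symm ⟨y, hy⟩ g = ⊥ :=
  calc y = ⊥ ↔ (⟨y, hy⟩ : Set.Iic x) = ⊥ := by rw [Subtype.ext_iff, Set.Iic.coe_bot]
    _ ↔ φ.symm ⟨y, hy⟩ = ⊥ := (map_eq_bot_iff φ.symm).symm
    _ ↔ ∀ g, φ.symm ⟨y, hy⟩ g = ⊥ := funext_iff

theorem eq_of_symm_apply_ne_bot (hy : y ≤ x) (hirr : IsIrredElem y) {g h : maxBelow G x}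
    (hg : φ.symm ⟨y, hy⟩ g ≠ ⊥) (hh : φ.symm ⟨y, hy⟩ h ≠ ⊥) : g = h := by
  by_contra hne
  have := Set.Iic.nontrivial_of_ne_bot hg
  have := Set.Iic.nontrivial_of_ne_bot hh
  have e : Set.Iic y ≃o ∀ k, Set.Iic (φ.symm ⟨y, hy⟩ k) :=
    (OrderIso.IicIic hy).symm.trans ((φ.symm.restrictIic _).trans (OrderIso.IicPi _))
  exact not_isIrreduciblePoset_pi (π := fun k => Set.Iic (φ.symm ⟨y, hy⟩ k)) hne
    (hirr.of_orderIso e.symm)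

variable (hφ : ∀ g : maxBelow G x, ((φ (deltaTuple G x g) : Set.Iic x) : L) = (g : L))
include hφ

theorem le_factor_iff (hy : y ≤ x) (g : maxBelow G x) :
    y ≤ g ↔ ∀ h, h ≠ g → φ.symm ⟨y, hy⟩ h = ⊥ := by
  have hδ : φ.symm ⟨g, g.2.2.1⟩ = deltaTuple G x g := by
    rw [φ.symm_apply_eq]; exact Subtype.ext (hφ g).symm
  rw [← le_deltaTuple_iff, ← hδ, φ.symm.le_iff_le]
  rfl

theorem exists_le_factor (hy : y ≤ x) (hy0 : y ≠ ⊥) (hirr : IsIrredElem y) :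
    ∃ g : maxBelow G x, y ≤ g := by
  obtain ⟨g, hg⟩ := not_forall.mp ((eq_bot_iff_forall_symm_apply_eq_bot hy).not.mp hy0)
  refine ⟨g, (le_factor_iff hφ hy g).mpr fun h hne => ?_⟩
  by_contra hh
  exact hne (eq_of_symm_apply_ne_bot hy hirr hh hg)

theorem eq_of_le_factor_of_le_factor (hy : y ≤ x) (hy0 : y ≠ ⊥) {g g' : maxBelow G x}
    (hg : y ≤ g) (hg' : y ≤ g') : g = g' := by
  obtain ⟨h, hh⟩ := not_forall.mp ((eq_bot_iff_forall_symm_apply_eq_bot hy).not.mp hy0)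
  have hhg : h = g := of_not_not (mt ((le_factor_iff hφ hy g).mp hg h) hh)
  have hhg' : h = g' := of_not_not (mt ((le_factor_iff hφ hy g').mp hg' h) hh)
  exact hhg.symm.trans hhg'

theorem le_factor_of_le (hz : z ≤ x) (hirr : IsIrredElem z) (hy0 : y ≠ ⊥) (hyz : y ≤ z)
    {g : maxBelow G x} (hyg : y ≤ g) : z ≤ g := by
  obtain ⟨g', hzg'⟩ := exists_le_factor hφ hz (ne_bot_of_le_ne_bot hy0 hyz) hirr
  rwa [eq_of_le_factor_of_le_factor hφ (hyg.trans g.2.2.1) hy0 hyg (hyz.trans hzg')]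

end Building

/-- the set of elementary divisors of `x` is the disjoint union of the sets
of elementary divisors of the factors of `x` in a building set `G`. -/
theorem elemDivisors_eq_disjUnion_over_factors {L : Type u} [SemilatticeInf L] [Fintype L]
    [OrderBot L] (G : Set L) (hG : IsBuilding G) (x : L) (hx : x ≠ ⊥) :
    (elemDivisors x = ⋃ g ∈ maxBelow G x, elemDivisors g) ∧
    (∀ g ∈ maxBelow G x, ∀ h ∈ maxBelow G x, g ≠ h →
      elemDivisors g ∩ elemDivisors h = ∅) := by
  obtain ⟨hGbot, hdecomp⟩ := hG
  obtain ⟨φ, hφ⟩ := hdecomp x hx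
  have hne_bot {g} (hg : g ∈ maxBelow G x) {y} (hy : y ∈ elemDivisors g) : y ≠ ⊥ :=
    ne_bot_of_mem_elemDivisors (hGbot g hg.1) hy
  refine ⟨Set.ext fun y => ⟨fun hy => ?_, fun hy => ?_⟩, ?_⟩
  · obtain ⟨g, hyg⟩ := exists_le_factor hφ hy.2.1 (ne_bot_of_mem_elemDivisors hx hy) hy.1
    exact Set.mem_biUnion g.2 (mem_maxBelow_of_le hy hyg g.2.2.1)
  · obtain ⟨g, hg, hyg⟩ := Set.mem_iUnion₂.mp hy
    exact mem_maxBelow_of_le_of_forall hyg hg.2.1 fun z hirr hzx hyz =>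
      le_factor_of_le hφ hzx hirr (hne_bot hg hyg) hyz (g := ⟨g, hg⟩) hyg.2.1
  · refine fun g hg h hh hgh => Set.eq_empty_of_forall_notMem fun y ⟨hyg, hyh⟩ => hgh ?_
    exact congrArg Subtype.val (eq_of_le_factor_of_le_factor hφ (hyg.2.1.trans hg.2.1)
      (hne_bot hg hyg) (g := ⟨g, hg⟩) (g' := ⟨h, hh⟩) hyg.2.1 hyh.2.1)
end

section
/- Let L be a finite meet-semilattice and G ⊆ L \ {0̂}. Then G is a building set of L if and only if: (a) every element of L \ {0̂} is a join of elements of G, and (b) for any x ∈ L, any pairwise distinct elements y, y₁, …, y_t of max G_{≤x}, and any z ∈ L with z < y, the following two conditions hold: (i) disjointness: G_{≤y} ∩ G_{≤ y₁∨…∨y_t} = ∅, and (ii) necessity: z∨y₁∨…∨y_t < y∨y₁∨…∨y_t. -/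
attribute [local instance] Classical.propDecidable

universe u

/-
When `G` is a building set, the isomorphism `∏ [0̂, x_j] ≅ [0̂, x]` sends the tuple which is `x_j` on
a set `A` of coordinates and `0̂` elsewhere to the join of `A`; disjointness and necessity are then
statements about tuples, read off coordinatewise.

Conversely, the candidate inverse isomorphism is `w ↦ (w ∧ x_j)_j`. Join-generation makes it an
order embedding, and the maximal elements below `x` pairwise meet in `0̂` by disjointness. Surjectivity
amounts to `(⋁_j t_j) ∧ x_i = t_i` for every tuple `t`. Necessity gives this when `⋁_j t_j = x`:
lowering one coordinate `t_i < x_i` would lower the join. The general case is reduced to that one by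
applying it below `w = ⋁_j t_j`, to the tuple over `max G_{≤ w}` which is `t_i ∧ m` at those `m ≤ x_i`
and `m` elsewhere.
-/

open Set

section Definitions

variable {L : Type u} [PartialOrder L]

def IsJoinGenerating [OrderBot L] (G : Set L) : Prop :=
  ∀ x : L, x ≠ ⊥ → ∃ S : Set L, S ⊆ G ∧ IsLUB S x

def SatisfiesDisjointnessAndNecessity (G : Set L) : Prop :=
  ∀ x : L, ∀ y ∈ maxBelow G x, ∀ T : Finset L, ↑T ⊆ maxBelow G x → y ∉ T →
    ∀ z : L, z < y →
      ((∀ j1 : L, IsLUB (↑T : Set L) j1 → {g ∈ G | g ≤ y} ∩ {g ∈ G | g ≤ j1} = ∅) ∧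
       (∀ jz jy : L, IsLUB (insert z (↑T : Set L)) jz →
          IsLUB (insert y (↑T : Set L)) jy → jz < jy))

noncomputable def indicatorTuple [OrderBot L] (G : Set L) (x : L) (A : Set L) :
    (h : maxBelow G x) → Iic (h : L) :=
  fun h => if (h : L) ∈ A then ⊤ else ⊥

end Definitions

theorem exists_isLUB_of_bddAbove {α : Type*} [SemilatticeInf α] [Finite α] {s : Set α}
    (hs : BddAbove s) : ∃ a, IsLUB s a := by
  obtain ⟨a, ha⟩ := (upperBounds s).toFinite.exists_minimal hs
  exact ⟨a, ha.prop, fun b hb => (ha.le_of_le (fun _ hc => le_inf (ha.prop hc) (hb hc))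
    inf_le_left).trans inf_le_right⟩

section Tuples

variable {L : Type u} [PartialOrder L] [OrderBot L] {G : Set L} {x : L}

theorem indicatorTuple_le_iff {A : Set L} {t : (h : maxBelow G x) → Iic (h : L)} :
    indicatorTuple G x A ≤ t ↔ ∀ h : maxBelow G x, (h : L) ∈ A → t h = ⊤ := by
  refine forall_congr' fun h => ?_
  by_cases hA : (h : L) ∈ A <;> simp [indicatorTuple, hA]

theorem le_indicatorTuple_iff {A : Set L} {t : (h : maxBelow G x) → Iic (h : L)} :
    t ≤ indicatorTuple G x A ↔ ∀ h : maxBelow G x, (h : L) ∉ A → t h = ⊥ := by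
  refine forall_congr' fun h => ?_
  by_cases hA : (h : L) ∈ A <;> simp [indicatorTuple, hA]

theorem deltaTuple_eq_indicatorTuple (g : maxBelow G x) :
    deltaTuple G x g = indicatorTuple G x {(g : L)} := by
  funext h
  simp only [deltaTuple, indicatorTuple, mem_singleton_iff]
  split_ifs <;> rfl

theorem deltaTuple_le_iff {g : maxBelow G x} {t : (h : maxBelow G x) → Iic (h : L)} :
    deltaTuple G x g ≤ t ↔ t g = ⊤ := by
  rw [deltaTuple_eq_indicatorTuple, indicatorTuple_le_iff]
  refine ⟨fun H => H g rfl, fun H h hg => ?_⟩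
  obtain rfl : h = g := Subtype.ext hg
  exact H

end Tuples

section Forward

variable {L : Type u} [SemilatticeInf L] [OrderBot L] {G : Set L} {x : L}
  {φ : ((h : maxBelow G x) → Iic (h : L)) ≃o Iic x}
  (hφ : ∀ g : maxBelow G x, (φ (deltaTuple G x g) : L) = g)
include hφ

theorem isLUB_indicatorTuple {A : Set L} (hA : A ⊆ maxBelow G x) :
    IsLUB A (φ (indicatorTuple G x A) : L) := by
  refine ⟨fun a ha => ?_, fun u hu => ?_⟩
  · exact (hφ ⟨a, hA ha⟩).ge.trans <| Subtype.coe_le_coe.2 <|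
      φ.monotone (deltaTuple_le_iff.2 (by simp [indicatorTuple, ha]))
  · have hle : indicatorTuple G x A ≤ φ.symm ⟨u ⊓ x, inf_le_right⟩ :=
      indicatorTuple_le_iff.2 fun h hh => deltaTuple_le_iff.1 <| φ.le_symm_apply.2 <| by
        rw [← Subtype.coe_le_coe, hφ]
        exact le_inf (hu hh) h.2.2.1
    exact (Subtype.coe_le_coe.2 (φ.le_symm_apply.1 hle)).trans inf_le_left

theorem isLUB_maxBelow_of_orderIso : IsLUB (maxBelow G x) x := by
  have htop : indicatorTuple G x (maxBelow G x) = ⊤ := funext fun h => if_pos h.2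
  simpa [htop] using isLUB_indicatorTuple hφ subset_rfl

theorem inter_eq_empty_of_orderIso (hG : ∀ g ∈ G, g ≠ ⊥) {y : L} (hy : y ∈ maxBelow G x)
    {T : Set L} (hT : T ⊆ maxBelow G x) (hyT : y ∉ T) {j : L} (hj : IsLUB T j) :
    {g ∈ G | g ≤ y} ∩ {g ∈ G | g ≤ j} = ∅ := by
  rw [eq_empty_iff_forall_notMem]
  rintro g ⟨⟨hgG, hgy⟩, -, hgj⟩
  have hgx : g ≤ x := hgy.trans hy.2.1
  have hy' : φ.symm ⟨g, hgx⟩ ≤ deltaTuple G x ⟨y, hy⟩ := by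
    rw [φ.symm_apply_le, ← Subtype.coe_le_coe, hφ]
    exact hgy
  have hT' : φ.symm ⟨g, hgx⟩ ≤ indicatorTuple G x T := by
    rw [φ.symm_apply_le, ← Subtype.coe_le_coe]
    exact hgj.trans_eq ((isLUB_indicatorTuple hφ hT).unique hj).symm
  rw [deltaTuple_eq_indicatorTuple, le_indicatorTuple_iff] at hy'
  rw [le_indicatorTuple_iff] at hT'
  have hbot : φ.symm ⟨g, hgx⟩ = ⊥ := funext fun h => by
    by_cases hh : (h : L) = y
    · exact hT' h (hh ▸ hyT)
    · exact hy' h hh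
  exact hG g hgG (congrArg Subtype.val (φ.symm_apply_eq.1 hbot |>.trans φ.map_bot))

/-- If the joins agreed, the preimage of `z`, raised to `⊤` on `T`, would lie above the tuple of
`insert y T`, forcing its `y`-coordinate, hence `z`, up to `y`. -/
theorem lt_of_orderIso {y : L} (hy : y ∈ maxBelow G x) {T : Set L} (hT : T ⊆ maxBelow G x)
    (hyT : y ∉ T) {z : L} (hz : z < y) {jz jy : L} (hjz : IsLUB (insert z T) jz)
    (hjy : IsLUB (insert y T) jy) : jz < jy := by
  have hjzy : jz ≤ jy := hjz.2 <| insert_subset_iff.2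
    ⟨hz.le.trans (hjy.1 (mem_insert _ _)), fun a ha => hjy.1 (mem_insert_of_mem _ ha)⟩
  refine hjzy.lt_of_ne fun heq => hz.not_ge ?_
  let w := φ.symm ⟨z, hz.le.trans hy.2.1⟩
  let s : (h : maxBelow G x) → Iic (h : L) := fun h => if (h : L) ∈ T then ⊤ else w h
  have hws : w ≤ s := fun h => by
    by_cases hh : (h : L) ∈ T <;> simp [s, hh]
  have hTs : indicatorTuple G x T ≤ s := indicatorTuple_le_iff.2 fun h hh => if_pos hh
  have hjs : jy ≤ φ s := by
    refine heq ▸ hjz.2 (insert_subset_iff.2 ⟨?_, fun a ha => ?_⟩)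
    · exact Subtype.coe_le_coe.2 ((φ.apply_symm_apply _).symm.trans_le (φ.monotone hws))
    · exact (isLUB_indicatorTuple hφ hT).1 ha |>.trans (φ.monotone hTs)
  rw [← (isLUB_indicatorTuple hφ (insert_subset_iff.2 ⟨hy, hT⟩)).unique hjy,
    Subtype.coe_le_coe, φ.le_iff_le, indicatorTuple_le_iff] at hjs
  have hwy : deltaTuple G x ⟨y, hy⟩ ≤ w := deltaTuple_le_iff.2 <| by
    simpa [s, hyT] using hjs ⟨y, hy⟩ (mem_insert _ _)
  rw [φ.le_symm_apply, ← Subtype.coe_le_coe, hφ] at hwy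
  exact hwy

end Forward

theorem IsBuilding.isJoinGenerating {L : Type u} [SemilatticeInf L] [OrderBot L] {G : Set L}
    (hB : IsBuilding G) : IsJoinGenerating G := fun x hx =>
  have ⟨_, hφ⟩ := hB.2 x hx
  ⟨maxBelow G x, fun _ hm => hm.1, isLUB_maxBelow_of_orderIso hφ⟩

theorem IsBuilding.satisfiesDisjointnessAndNecessity {L : Type u} [SemilatticeInf L] [OrderBot L]
    {G : Set L} (hB : IsBuilding G) : SatisfiesDisjointnessAndNecessity G := by
  intro x y hy T hT hyT z hz
  obtain ⟨_, hφ⟩ := hB.2 x fun hx => hB.1 y hy.1 (le_bot_iff.1 (hx ▸ hy.2.1))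
  exact ⟨fun _ hj => inter_eq_empty_of_orderIso hφ hB.1 hy hT hyT hj,
    fun _ _ => lt_of_orderIso hφ hy hT hyT hz⟩

section Backward

section PartialOrder

variable {L : Type u} [PartialOrder L] {G : Set L}

theorem exists_mem_maxBelow_ge [Finite L] {g x : L} (hg : g ∈ G) (hgx : g ≤ x) :
    ∃ m ∈ maxBelow G x, g ≤ m := by
  obtain ⟨m, hm, hmax⟩ := (toFinite {h | h ∈ G ∧ g ≤ h ∧ h ≤ x}).exists_maximalFor id _
    ⟨g, hg, le_rfl, hgx⟩
  exact ⟨m, ⟨hm.1, hm.2.2, fun h hh hhx hmh =>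
    (hmh.antisymm (hmax ⟨hh, hm.2.1.trans hmh, hhx⟩ hmh)).symm⟩, hm.2.1⟩

theorem mem_upperBounds_range_tuple {x : L} (t : (h : maxBelow G x) → Iic (h : L)) :
    x ∈ upperBounds (range fun h => (t h : L)) :=
  forall_mem_range.2 fun h => (t h).2.trans h.2.2.1

variable [OrderBot L]

theorem IsJoinGenerating.le_of_forall_le (hJ : IsJoinGenerating G) {a b : L}
    (h : ∀ g ∈ G, g ≤ a → g ≤ b) : a ≤ b := by
  rcases eq_or_ne a ⊥ with rfl | ha
  · exact bot_le
  obtain ⟨S, hSG, hS⟩ := hJ a ha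
  exact hS.2 fun s hs => h s (hSG hs) (hS.1 hs)

theorem SatisfiesDisjointnessAndNecessity.eq_of_le_of_le
    (hDN : SatisfiesDisjointnessAndNecessity G) (hG : ∀ g ∈ G, g ≠ ⊥) {x g h h' : L}
    (hh : h ∈ maxBelow G x) (hh' : h' ∈ maxBelow G x) (hg : g ∈ G) (hgh : g ≤ h)
    (hgh' : g ≤ h') : h = h' := by
  by_contra hne
  have hdisj := (hDN x h hh {h'} (by simp [hh']) (by simp [hne]) ⊥
    (bot_lt_iff_ne_bot.2 (hG h hh.1))).1 h' (by simp [isLUB_singleton])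
  exact (eq_empty_iff_forall_notMem.1 hdisj) g ⟨⟨hg, hgh⟩, hg, hgh'⟩

end PartialOrder

variable {L : Type u} [SemilatticeInf L] {G : Set L}

theorem inf_eq_bot_of_mem_maxBelow [OrderBot L] (hG : ∀ g ∈ G, g ≠ ⊥) (hJ : IsJoinGenerating G)
    (hDN : SatisfiesDisjointnessAndNecessity G) {x h h' : L} (hh : h ∈ maxBelow G x)
    (hh' : h' ∈ maxBelow G x) (hne : h ≠ h') : h ⊓ h' = ⊥ :=
  le_bot_iff.1 <| hJ.le_of_forall_le fun _ hg hgh =>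
    absurd (hDN.eq_of_le_of_le hG hh hh' hg (le_inf_iff.1 hgh).1 (le_inf_iff.1 hgh).2) hne

theorem SatisfiesDisjointnessAndNecessity.coe_eq_of_isLUB [Finite L]
    (hDN : SatisfiesDisjointnessAndNecessity G) {x : L} {t : (h : maxBelow G x) → Iic (h : L)}
    (ht : IsLUB (range fun h => (t h : L)) x) (h₀ : maxBelow G x) : (t h₀ : L) = h₀ := by
  by_contra hne
  set T := maxBelow G x \ {(h₀ : L)}
  have hTx : ∀ a ∈ T, a ≤ x := fun a ha => ha.1.2.1
  obtain ⟨jz, hjz⟩ := exists_isLUB_of_bddAbove (s := insert (t h₀ : L) T)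
    ⟨x, insert_subset_iff.2 ⟨(t h₀).2.trans h₀.2.2.1, hTx⟩⟩
  obtain ⟨jy, hjy⟩ := exists_isLUB_of_bddAbove (s := insert (h₀ : L) T)
    ⟨x, insert_subset_iff.2 ⟨h₀.2.2.1, hTx⟩⟩
  have hlt : jz < jy := by
    refine (hDN x h₀ h₀.2 T.toFinite.toFinset (by simp [T]) (by simp [T]) _
      (lt_of_le_of_ne (t h₀).2 hne)).2 jz jy ?_ ?_ <;> rwa [Finite.coe_toFinset]
  have hxjz : x ≤ jz := ht.2 <| forall_mem_range.2 fun h => by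
    by_cases hh : h = h₀
    · exact hh ▸ hjz.1 (mem_insert _ _)
    · exact (t h).2.trans (hjz.1 (mem_insert_of_mem _ ⟨h.2, fun e => hh (Subtype.ext e)⟩))
  exact (hlt.trans_le ((hjy.2 (insert_subset_iff.2 ⟨h₀.2.2.1, hTx⟩)).trans hxjz)).false

theorem inf_eq_of_isLUB_range [OrderBot L] [Finite L] (hG : ∀ g ∈ G, g ≠ ⊥) (hJ : IsJoinGenerating G)
    (hDN : SatisfiesDisjointnessAndNecessity G) {x w : L} {t : (h : maxBelow G x) → Iic (h : L)}
    (ht : IsLUB (range fun h => (t h : L)) w) (h₀ : maxBelow G x) : w ⊓ h₀ = t h₀ := by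
  refine le_antisymm (hJ.le_of_forall_le fun g hg hgw => ?_) (le_inf (ht.1 ⟨h₀, rfl⟩) (t h₀).2)
  have hwx : w ≤ x := ht.2 (mem_upperBounds_range_tuple t)
  obtain ⟨m, hm, hgm⟩ := exists_mem_maxBelow_ge hg (le_inf_iff.1 hgw).1
  have hmh₀ : m ≤ h₀ := by
    obtain ⟨h, hh, hmh⟩ := exists_mem_maxBelow_ge hm.1 (hm.2.1.trans hwx)
    exact hDN.eq_of_le_of_le hG hh h₀.2 hg (hgm.trans hmh) (le_inf_iff.1 hgw).2 ▸ hmh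
  let s : (m : maxBelow G w) → Iic (m : L) :=
    fun m => if (m : L) ≤ h₀ then ⟨t h₀ ⊓ m, inf_le_right⟩ else ⊤
  have hs : IsLUB (range fun m => (s m : L)) w := by
    refine ⟨mem_upperBounds_range_tuple s, fun u hu => ht.2 <| forall_mem_range.2 fun h =>
      hJ.le_of_forall_le fun a ha hat => ?_⟩
    obtain ⟨m', hm', ham'⟩ := exists_mem_maxBelow_ge ha (hat.trans (ht.1 ⟨h, rfl⟩))
    refine le_trans ?_ (hu ⟨⟨m', hm'⟩, rfl⟩)
    by_cases hm'h₀ : m' ≤ h₀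
    · obtain rfl : h = h₀ := Subtype.ext <|
        hDN.eq_of_le_of_le hG h.2 h₀.2 ha (hat.trans (t h).2) (ham'.trans hm'h₀)
      simpa [s, hm'h₀] using le_inf hat ham'
    · simpa [s, hm'h₀] using ham'
  have hsm := hDN.coe_eq_of_isLUB hs ⟨m, hm⟩
  simp only [s, if_pos hmh₀] at hsm
  exact hgm.trans (hsm ▸ inf_le_left)

def meetTuple (G : Set L) (x w : L) : (h : maxBelow G x) → Iic (h : L) :=
  fun h => ⟨w ⊓ h, inf_le_right⟩

theorem IsJoinGenerating.isLUB_range_inf [OrderBot L] [Finite L] (hJ : IsJoinGenerating G) {x w : L} (hw : w ≤ x) :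
    IsLUB (range fun h : maxBelow G x => w ⊓ (h : L)) w :=
  ⟨forall_mem_range.2 fun _ => inf_le_left, fun u hu => hJ.le_of_forall_le fun g hg hgw => by
    obtain ⟨m, hm, hgm⟩ := exists_mem_maxBelow_ge hg (hgw.trans hw)
    exact (le_inf hgw hgm).trans (hu ⟨⟨m, hm⟩, rfl⟩)⟩

theorem meetTuple_le_meetTuple_iff [OrderBot L] [Finite L] (hJ : IsJoinGenerating G) {x w w' : L} (hw : w ≤ x) :
    meetTuple G x w ≤ meetTuple G x w' ↔ w ≤ w' :=
  ⟨fun H => (hJ.isLUB_range_inf hw).2 (forall_mem_range.2 fun h =>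
    (show w ⊓ (h : L) ≤ w' ⊓ h from H h).trans inf_le_left),
    fun H _ => inf_le_inf_right _ H⟩

theorem exists_meetTuple_eq [OrderBot L] [Finite L] (hG : ∀ g ∈ G, g ≠ ⊥) (hJ : IsJoinGenerating G)
    (hDN : SatisfiesDisjointnessAndNecessity G) {x : L} (t : (h : maxBelow G x) → Iic (h : L)) :
    ∃ w ≤ x, meetTuple G x w = t := by
  obtain ⟨w, hw⟩ := exists_isLUB_of_bddAbove ⟨x, mem_upperBounds_range_tuple t⟩
  exact ⟨w, hw.2 (mem_upperBounds_range_tuple t),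
    funext fun h => Subtype.ext (inf_eq_of_isLUB_range hG hJ hDN hw h)⟩

theorem meetTuple_eq_deltaTuple [OrderBot L] (hG : ∀ g ∈ G, g ≠ ⊥) (hJ : IsJoinGenerating G)
    (hDN : SatisfiesDisjointnessAndNecessity G) {x : L} (g : maxBelow G x) :
    meetTuple G x g = deltaTuple G x g := by
  funext h
  apply Subtype.ext
  by_cases hg : (h : L) = g
  · simp [meetTuple, deltaTuple, hg]
  · simp [meetTuple, deltaTuple, hg,
      inf_eq_bot_of_mem_maxBelow hG hJ hDN g.2 h.2 (Ne.symm hg)]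

theorem isBuilding_of_isJoinGenerating [OrderBot L] [Finite L] (hG : ∀ g ∈ G, g ≠ ⊥) (hJ : IsJoinGenerating G)
    (hDN : SatisfiesDisjointnessAndNecessity G) : IsBuilding G := by
  refine ⟨hG, fun x _ => ?_⟩
  let ψ : Iic x ↪o ((h : maxBelow G x) → Iic (h : L)) :=
    OrderEmbedding.ofMapLEIff (fun w => meetTuple G x w) fun w _ => meetTuple_le_meetTuple_iff hJ w.2
  have hψ : Function.Surjective ψ := fun t =>
    let ⟨w, hw, hwt⟩ := exists_meetTuple_eq hG hJ hDN t
    ⟨⟨w, hw⟩, hwt⟩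
  refine ⟨(OrderIso.ofSurjective ψ hψ).symm, fun g => ?_⟩
  rw [← meetTuple_eq_deltaTuple hG hJ hDN g]
  exact congrArg Subtype.val ((OrderIso.ofSurjective ψ hψ).symm_apply_apply ⟨g, g.2.2.1⟩)

end Backward

/-- characterization of building sets, Proposition 2.3 (4):
join-generation together with disjointness and necessity. -/
theorem isBuilding_iff_disjointness_and_necessity {L : Type u} [SemilatticeInf L]
    [Fintype L] [OrderBot L] (G : Set L) (hG0 : ∀ g ∈ G, g ≠ ⊥) :
    IsBuilding G ↔
      ((∀ x : L, x ≠ ⊥ → ∃ S : Set L, S ⊆ G ∧ IsLUB S x) ∧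
       (∀ x : L, ∀ y ∈ maxBelow G x, ∀ T : Finset L, ↑T ⊆ maxBelow G x → y ∉ T →
          ∀ z : L, z < y →
            ((∀ j1 : L, IsLUB (↑T : Set L) j1 →
                {g ∈ G | g ≤ y} ∩ {g ∈ G | g ≤ j1} = ∅) ∧
             (∀ jz jy : L, IsLUB (insert z (↑T : Set L)) jz →
                IsLUB (insert y (↑T : Set L)) jy → jz < jy)))) :=
  ⟨fun hB => ⟨hB.isJoinGenerating, hB.satisfiesDisjointnessAndNecessity⟩,
    fun ⟨hJ, hDN⟩ => isBuilding_of_isJoinGenerating hG0 hJ hDN⟩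
end

section
/- Let L be a finite meet-semilattice, G a building set of L, and α a maximal element of G. Then G̃ = (G \ {α}) ∪ {[α,0̂]} is a building set of the combinatorial blowup Bl_α L. -/
attribute [local instance] Classical.propDecidable

universe u

/-- The combinatorial blowup of `L` at `α`: elements are either `y ∈ L` with `y ≱ α`
(encoded `(false, y)`), or symbols `[α, y]` for `y ≱ α` such that `y ∨ α` exists in `L`
(encoded `(true, y)`); the order is induced by the product order on `Bool × L`. -/
def Blowup (L : Type u) [PartialOrder L] (α : L) : Type u :=
  {p : Bool × L // ¬ α ≤ p.2 ∧ (p.1 = true → ∃ j : L, IsLUB {α, p.2} j)}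

noncomputable instance blowupPartialOrder {L : Type u} [PartialOrder L] (α : L) :
    PartialOrder (Blowup L α) :=
  inferInstanceAs (PartialOrder
    {p : Bool × L // ¬ α ≤ p.2 ∧ (p.1 = true → ∃ j : L, IsLUB {α, p.2} j)})

/-- The element of the blowup corresponding to `y ∈ L`, `y ≱ α`. -/
def Blowup.mk1 {L : Type u} [PartialOrder L] {α : L} (y : L) (hy : ¬ α ≤ y) : Blowup L α :=
  ⟨(false, y), hy, fun hb => Bool.noConfusion hb⟩

/-- The element `[α, y]` of the blowup, for `y ≱ α` such that `y ∨ α` exists. -/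
def Blowup.mk2 {L : Type u} [PartialOrder L] {α : L} (y : L) (hy : ¬ α ≤ y)
    (hj : ∃ j : L, IsLUB {α, y} j) : Blowup L α :=
  ⟨(true, y), hy, fun _ => hj⟩

/-- The blowup of a semilattice with `α ≠ ⊥` has a bottom element, the copy of `⊥`. -/
def blowupOrderBot {L : Type u} [PartialOrder L] [OrderBot L] {α : L} (hα : α ≠ ⊥) :
    OrderBot (Blowup L α) where
  bot := Blowup.mk1 ⊥ (fun h => hα (le_bot_iff.mp h))
  bot_le := fun w => by
    show ((false, (⊥ : L)) : Bool × L) ≤ w.val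
    exact ⟨Bool.false_le _, bot_le⟩

/-! Below an element `w = (b, x)` of the blowup lies exactly the interval below `(b, x)` in
`Bool × L`: when `b = true`, every `z ≤ x` has a join with `α`, because `x` has one and `L` is a
finite meet-semilattice. On this interval the new building set is `{(true, ⊥)} ∪ {false} × G`
(`α` itself is not below `x`), the product of the building set `{true}` of the two-element chain
with `G`. The building condition at an element is preserved by such products and by order
isomorphisms of intervals that match the building sets, so it holds at `(b, x)` and hence at `w`. -/

open Set Function

namespace OrderIso

variable {ι ι' κ : Type*}

def piCongr {A : ι → Type*} {B : ι' → Type*} [∀ i, LE (A i)] [∀ j, LE (B j)]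
    (e : ι ≃ ι') (F : ∀ i, A i ≃o B (e i)) : (∀ i, A i) ≃o (∀ j, B j) where
  toEquiv := e.piCongr fun i => (F i).toEquiv
  map_rel_iff' {f g} := by
    refine ⟨fun h i => ?_, fun h j => ?_⟩
    · simpa [Equiv.piCongr_apply_apply] using h (e i)
    · obtain ⟨i, rfl⟩ := e.surjective j
      simpa [Equiv.piCongr_apply_apply] using h i

theorem piCongr_symm_apply {A : ι → Type*} {B : ι' → Type*} [∀ i, LE (A i)] [∀ j, LE (B j)]
    (e : ι ≃ ι') (F : ∀ i, A i ≃o B (e i)) (f : ∀ j, B j) (i : ι) :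
    (piCongr e F).symm f i = (F i).symm (f (e i)) :=
  congrFun (Equiv.piCongr_symm_apply e (fun i => (F i).toEquiv) f) i

theorem piCongr_symm_update_top [DecidableEq ι] [DecidableEq ι'] {A : ι → Type*} {B : ι' → Type*}
    [∀ i, PartialOrder (A i)] [∀ i, OrderBot (A i)] [∀ i, OrderTop (A i)]
    [∀ j, PartialOrder (B j)] [∀ j, OrderBot (B j)] [∀ j, OrderTop (B j)]
    (e : ι ≃ ι') (F : ∀ i, A i ≃o B (e i)) (i : ι) :
    (piCongr e F).symm (update ⊥ (e i) ⊤) = update ⊥ i ⊤ := by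
  funext k
  rw [piCongr_symm_apply]
  by_cases hk : k = i
  · subst hk
    simp
  · simp [update_of_ne hk, update_of_ne (e.injective.ne hk)]

def piCongrRight {A B : ι → Type*} [∀ i, LE (A i)] [∀ i, LE (B i)] (F : ∀ i, A i ≃o B i) :
    (∀ i, A i) ≃o (∀ i, B i) :=
  piCongr (Equiv.refl ι) F

theorem piCongrRight_symm_update_top [DecidableEq ι] {A B : ι → Type*}
    [∀ i, PartialOrder (A i)] [∀ i, OrderBot (A i)] [∀ i, OrderTop (A i)]
    [∀ i, PartialOrder (B i)] [∀ i, OrderBot (B i)] [∀ i, OrderTop (B i)]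
    (F : ∀ i, A i ≃o B i) (i : ι) :
    (piCongrRight F).symm (update ⊥ i ⊤) = update ⊥ i ⊤ :=
  piCongr_symm_update_top (Equiv.refl ι) F i

def sumPiProd (A : ι ⊕ κ → Type*) [∀ s, LE (A s)] :
    (∀ s, A s) ≃o (∀ i, A (.inl i)) × (∀ k, A (.inr k)) where
  toEquiv := Equiv.sumPiEquivProdPi A
  map_rel_iff' {f g} := by
    refine ⟨fun h s => ?_, fun h => ⟨fun i => h _, fun k => h _⟩⟩
    rcases s with i | k
    exacts [h.1 i, h.2 k]

theorem sumPiProd_update_inl [DecidableEq ι] [DecidableEq (ι ⊕ κ)] {A : ι ⊕ κ → Type*}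
    [∀ s, LE (A s)] [∀ s, Bot (A s)] [∀ s, Top (A s)] (i : ι) :
    sumPiProd A (update ⊥ (.inl i) ⊤) = (update ⊥ i ⊤, ⊥) := by
  ext j <;> simp [sumPiProd, Equiv.sumPiEquivProdPi, Pi.bot_def]

theorem sumPiProd_update_inr [DecidableEq κ] [DecidableEq (ι ⊕ κ)] {A : ι ⊕ κ → Type*}
    [∀ s, LE (A s)] [∀ s, Bot (A s)] [∀ s, Top (A s)] (k : κ) :
    sumPiProd A (update ⊥ (.inr k) ⊤) = (⊥, update ⊥ k ⊤) := by
  ext j <;> simp [sumPiProd, Equiv.sumPiEquivProdPi, Pi.bot_def]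

def prodCongr {A B C D : Type*} [LE A] [LE B] [LE C] [LE D] (f : A ≃o B) (g : C ≃o D) :
    A × C ≃o B × D where
  toEquiv := f.toEquiv.prodCongr g.toEquiv
  map_rel_iff' := by simp [Prod.le_def]

variable {P Q : Type*} [PartialOrder P] [PartialOrder Q]

def IicProd (a : P) (b : Q) : Iic (a, b) ≃o Iic a × Iic b where
  toFun z := (⟨z.1.1, z.2.1⟩, ⟨z.1.2, z.2.2⟩)
  invFun z := ⟨(z.1, z.2), z.1.2, z.2.2⟩
  left_inv _ := rfl
  right_inv _ := rfl
  map_rel_iff' := Iff.rfl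

def IicInl [OrderBot Q] (a : P) : Iic a ≃o Iic ((a, ⊥) : P × Q) where
  toFun z := ⟨(z, ⊥), z.2, le_rfl⟩
  invFun z := ⟨z.1.1, z.2.1⟩
  left_inv _ := rfl
  right_inv z := Subtype.ext (Prod.ext rfl (le_bot_iff.mp z.2.2).symm)
  map_rel_iff' := by simp [← Subtype.coe_le_coe]

def IicInr [OrderBot P] (b : Q) : Iic b ≃o Iic ((⊥, b) : P × Q) where
  toFun z := ⟨(⊥, z), le_rfl, z.2⟩
  invFun z := ⟨z.1.2, z.2.2⟩
  left_inv _ := rfl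
  right_inv z := Subtype.ext (Prod.ext (le_bot_iff.mp z.2.1).symm rfl)
  map_rel_iff' := by simp [← Subtype.coe_le_coe]

def IicRestrict {x : P} {y : Q} (f : Iic x ≃o Iic y) (z : Iic x) :
    Iic (z : P) ≃o Iic (f z : Q) where
  toFun w := ⟨f ⟨w, w.2.trans z.2⟩, f.monotone (show (⟨w, _⟩ : Iic x) ≤ z from w.2)⟩
  invFun v := ⟨f.symm ⟨v, v.2.trans (f z).2⟩, f.symm_apply_le.mpr v.2⟩
  left_inv w := Subtype.ext (show ((f.symm (f ⟨w, w.2.trans z.2⟩) : Iic x) : P) = w by simp)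
  right_inv v := Subtype.ext (show ((f (f.symm ⟨v, v.2.trans (f z).2⟩) : Iic y) : Q) = v by simp)
  map_rel_iff' := f.le_iff_le

end OrderIso

section MaxBelow

variable {P Q : Type*} [PartialOrder P] [PartialOrder Q] {G : Set P} {H : Set Q} {x : P} {y : Q}

theorem maxBelow_subset_Iic : maxBelow G x ⊆ Iic x := fun _ hg => hg.2.1

theorem apply_mem_maxBelow (f : Iic x ≃o Iic y) (hf : ∀ z : Iic x, (z : P) ∈ G ↔ (f z : Q) ∈ H)
    (z : Iic x) (hz : (z : P) ∈ maxBelow G x) : (f z : Q) ∈ maxBelow H y := by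
  refine ⟨(hf z).mp hz.1, (f z).2, fun h hH hy hzh => ?_⟩
  set w := f.symm ⟨h, hy⟩
  have hw : f w = ⟨h, hy⟩ := f.apply_symm_apply _
  have hwz : w = z := Subtype.ext <|
    hz.2.2 w ((hf w).mpr (by rwa [hw])) w.2 (f.le_symm_apply.mpr hzh)
  simpa [hwz] using congrArg Subtype.val hw.symm

def maxBelowEquivOfOrderIso (f : Iic x ≃o Iic y) (hf : ∀ z : Iic x, (z : P) ∈ G ↔ (f z : Q) ∈ H) :
    maxBelow G x ≃ maxBelow H y where
  toFun g := ⟨f ⟨g, maxBelow_subset_Iic g.2⟩, apply_mem_maxBelow f hf _ g.2⟩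
  invFun h := ⟨f.symm ⟨h, maxBelow_subset_Iic h.2⟩, apply_mem_maxBelow f.symm
    (fun z : Iic y => by simpa using (hf (f.symm z)).symm) _ h.2⟩
  left_inv g := Subtype.ext <|
    show ((f.symm (f ⟨g, maxBelow_subset_Iic g.2⟩) : Iic x) : P) = g by simp
  right_inv h := Subtype.ext <|
    show ((f (f.symm ⟨h, maxBelow_subset_Iic h.2⟩) : Iic y) : Q) = h by simp

end MaxBelow

section Building

variable {P Q : Type*} [PartialOrder P] [OrderBot P] [PartialOrder Q] [OrderBot Q]

def IsBuildingAt (G : Set P) (x : P) : Prop :=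
  ∃ φ : ((g : maxBelow G x) → Iic (g : P)) ≃o Iic x, ∀ g, (φ (deltaTuple G x g) : P) = g

theorem deltaTuple_eq_update (G : Set P) (x : P) [DecidableEq (maxBelow G x)] (g : maxBelow G x) :
    deltaTuple G x g = update ⊥ g ⊤ := by
  funext h
  by_cases hg : h = g
  · subst hg
    simp [deltaTuple]
    rfl
  · simp [deltaTuple, Subtype.coe_inj, hg]
    rfl

theorem isBuildingAt_bot {G : Set P} (hG : ∀ g ∈ G, g ≠ ⊥) : IsBuildingAt G ⊥ := by
  have : IsEmpty (maxBelow G ⊥) := ⟨fun g => hG g g.2.1 (le_bot_iff.mp g.2.2.1)⟩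
  have : Unique (Iic (⊥ : P)) := ⟨⟨⊥⟩, fun z => Subtype.ext (le_bot_iff.mp z.2)⟩
  exact ⟨OrderIso.ofUnique _ _, isEmptyElim⟩

theorem isBuildingAt_singleton (a : P) : IsBuildingAt {a} a := by
  let a' : maxBelow {a} a := ⟨a, rfl, le_rfl, fun h hh _ _ => hh⟩
  have ha' (g : maxBelow {a} a) : g = a' := Subtype.ext g.2.1
  refine ⟨⟨⟨fun f => f a', fun z g => ⟨z, z.2.trans (ha' g ▸ le_rfl)⟩, fun f => ?_, fun _ => rfl⟩,
    ?_⟩, fun g => ?_⟩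
  · funext g
    obtain rfl := (ha' g).symm
    rfl
  · refine ⟨fun h g => ?_, fun h => h a'⟩
    obtain rfl := (ha' g).symm
    exact h
  · obtain rfl := (ha' g).symm
    simp [a', deltaTuple]

theorem IsBuilding.isBuildingAt {G : Set P} (hG : IsBuilding G) (x : P) : IsBuildingAt G x := by
  rcases eq_or_ne x ⊥ with rfl | hx
  · exact isBuildingAt_bot hG.1
  · exact hG.2 x hx

theorem IsBuildingAt.of_orderIso {G : Set P} {H : Set Q} {x : P} {y : Q}
    (hx : IsBuildingAt G x) (f : Iic x ≃o Iic y) (hf : ∀ z : Iic x, (z : P) ∈ G ↔ (f z : Q) ∈ H) :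
    IsBuildingAt H y := by
  classical
  obtain ⟨φ, hφ⟩ := hx
  simp only [deltaTuple_eq_update] at hφ
  let e := maxBelowEquivOfOrderIso f hf
  let ψ : (∀ g : maxBelow G x, Iic (g : P)) ≃o ∀ h : maxBelow H y, Iic (h : Q) :=
    OrderIso.piCongr e fun g => f.IicRestrict ⟨g, maxBelow_subset_Iic g.2⟩
  refine ⟨ψ.symm.trans (φ.trans f), fun h => ?_⟩
  obtain ⟨g, rfl⟩ := e.surjective h
  have hψ : ψ.symm (update ⊥ (e g) ⊤) = update ⊥ g ⊤ := OrderIso.piCongr_symm_update_top _ _ _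
  have hφg : φ (update ⊥ g ⊤) = ⟨g, maxBelow_subset_Iic g.2⟩ := Subtype.ext (hφ g)
  rw [deltaTuple_eq_update, OrderIso.trans_apply, OrderIso.trans_apply, hψ, hφg]
  rfl

section Product

def buildingProd (G₁ : Set P) (G₂ : Set Q) : Set (P × Q) := (·, ⊥) '' G₁ ∪ (⊥, ·) '' G₂

variable {G₁ : Set P} {G₂ : Set Q} {x₁ : P} {x₂ : Q}

theorem mk_bot_mem_maxBelow_buildingProd (hG₁ : ∀ g ∈ G₁, g ≠ ⊥) {g : P}
    (hg : g ∈ maxBelow G₁ x₁) : (g, ⊥) ∈ maxBelow (buildingProd G₁ G₂) (x₁, x₂) := by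
  refine ⟨.inl ⟨g, hg.1, rfl⟩, ⟨hg.2.1, bot_le⟩, ?_⟩
  rintro _ (⟨g', hg', rfl⟩ | ⟨g', -, rfl⟩) hx hgg'
  · rw [hg.2.2 g' hg' hx.1 hgg'.1]
  · exact absurd (le_bot_iff.mp hgg'.1) (hG₁ g hg.1)

theorem bot_mk_mem_maxBelow_buildingProd (hG₂ : ∀ g ∈ G₂, g ≠ ⊥) {g : Q}
    (hg : g ∈ maxBelow G₂ x₂) : (⊥, g) ∈ maxBelow (buildingProd G₁ G₂) (x₁, x₂) := by
  refine ⟨.inr ⟨g, hg.1, rfl⟩, ⟨bot_le, hg.2.1⟩, ?_⟩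
  rintro _ (⟨g', -, rfl⟩ | ⟨g', hg', rfl⟩) hx hgg'
  · exact absurd (le_bot_iff.mp hgg'.2) (hG₂ g hg.1)
  · rw [hg.2.2 g' hg' hx.2 hgg'.2]

theorem mem_maxBelow_of_mk_bot_mem {g : P} (hg : (g, ⊥) ∈ maxBelow (buildingProd G₁ G₂) (x₁, x₂))
    (hgG : g ∈ G₁) : g ∈ maxBelow G₁ x₁ :=
  ⟨hgG, hg.2.1.1, fun h hh hhx hgh => congrArg Prod.fst <|
    hg.2.2 (h, ⊥) (.inl ⟨h, hh, rfl⟩) ⟨hhx, bot_le⟩ ⟨hgh, le_rfl⟩⟩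

theorem mem_maxBelow_of_bot_mk_mem {g : Q} (hg : (⊥, g) ∈ maxBelow (buildingProd G₁ G₂) (x₁, x₂))
    (hgG : g ∈ G₂) : g ∈ maxBelow G₂ x₂ :=
  ⟨hgG, hg.2.1.2, fun h hh hhx hgh => congrArg Prod.snd <|
    hg.2.2 (⊥, h) (.inr ⟨h, hh, rfl⟩) ⟨bot_le, hhx⟩ ⟨le_rfl, hgh⟩⟩

noncomputable def maxBelowBuildingProdEquiv (hG₁ : ∀ g ∈ G₁, g ≠ ⊥) (hG₂ : ∀ g ∈ G₂, g ≠ ⊥) :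
    maxBelow G₁ x₁ ⊕ maxBelow G₂ x₂ ≃ maxBelow (buildingProd G₁ G₂) (x₁, x₂) := by
  refine Equiv.ofBijective (Sum.elim (fun g => ⟨(g, ⊥), mk_bot_mem_maxBelow_buildingProd hG₁ g.2⟩)
    (fun g => ⟨(⊥, g), bot_mk_mem_maxBelow_buildingProd hG₂ g.2⟩)) ⟨?_, ?_⟩
  · rintro (g | g) (g' | g') h <;>
      simp only [Sum.elim_inl, Sum.elim_inr, Subtype.mk.injEq, Prod.mk.injEq] at h
    · exact congrArg _ (Subtype.ext h.1)
    · exact absurd h.1 (hG₁ g g.2.1)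
    · exact absurd h.1.symm (hG₁ g' g'.2.1)
    · exact congrArg _ (Subtype.ext h.2)
  · rintro ⟨w, hw⟩
    rcases hw.1 with ⟨g, hg, rfl⟩ | ⟨g, hg, rfl⟩
    · exact ⟨.inl ⟨g, mem_maxBelow_of_mk_bot_mem hw hg⟩, rfl⟩
    · exact ⟨.inr ⟨g, mem_maxBelow_of_bot_mk_mem hw hg⟩, rfl⟩

theorem IsBuildingAt.prod (hG₁ : ∀ g ∈ G₁, g ≠ ⊥) (hG₂ : ∀ g ∈ G₂, g ≠ ⊥)
    (h₁ : IsBuildingAt G₁ x₁) (h₂ : IsBuildingAt G₂ x₂) :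
    IsBuildingAt (buildingProd G₁ G₂) (x₁, x₂) := by
  classical
  obtain ⟨φ₁, hφ₁⟩ := h₁
  obtain ⟨φ₂, hφ₂⟩ := h₂
  simp only [deltaTuple_eq_update] at hφ₁ hφ₂
  let e := maxBelowBuildingProdEquiv (x₁ := x₁) (x₂ := x₂) hG₁ hG₂
  let ψ₁ := (OrderIso.piCongrRight fun g : maxBelow G₁ x₁ =>
    OrderIso.IicInl (Q := Q) (g : P)).symm.trans φ₁
  let ψ₂ := (OrderIso.piCongrRight fun g : maxBelow G₂ x₂ =>
    OrderIso.IicInr (P := P) (g : Q)).symm.trans φ₂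
  have hψ₁ (g) : (ψ₁ (update ⊥ g ⊤) : P) = g := by
    rw [OrderIso.trans_apply, OrderIso.piCongrRight_symm_update_top, hφ₁]
  have hψ₂ (g) : (ψ₂ (update ⊥ g ⊤) : Q) = g := by
    rw [OrderIso.trans_apply, OrderIso.piCongrRight_symm_update_top, hφ₂]
  let A := fun s => ↥(Iic (e s : P × Q))
  let ψ : (∀ s, A s) ≃o ∀ w : maxBelow (buildingProd G₁ G₂) (x₁, x₂), Iic (w : P × Q) :=
    OrderIso.piCongr e fun _ => OrderIso.refl _
  let Φ := (OrderIso.sumPiProd A).trans ((OrderIso.prodCongr ψ₁ ψ₂).trans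
    (OrderIso.IicProd x₁ x₂).symm)
  have hΦ (u) : (Φ u : P × Q) = ((ψ₁ (OrderIso.sumPiProd A u).1 : P),
      (ψ₂ (OrderIso.sumPiProd A u).2 : Q)) := rfl
  refine ⟨ψ.symm.trans Φ, fun w => ?_⟩
  obtain ⟨s, rfl⟩ := e.surjective w
  have hψ : ψ.symm (update ⊥ (e s) ⊤) = update ⊥ s ⊤ := OrderIso.piCongr_symm_update_top _ _ _
  rw [deltaTuple_eq_update, OrderIso.trans_apply, hψ, hΦ]
  rcases s with g | g
  · rw [OrderIso.sumPiProd_update_inl]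
    exact Prod.ext (hψ₁ g) (congrArg Subtype.val (OrderIso.map_bot ψ₂))
  · rw [OrderIso.sumPiProd_update_inr]
    exact Prod.ext (congrArg Subtype.val (OrderIso.map_bot ψ₁)) (hψ₂ g)

end Product

theorem isBuildingAt_bool (b : Bool) : IsBuildingAt {true} b := by
  cases b
  · exact isBuildingAt_bot (by simp)
  · exact isBuildingAt_singleton true

end Building

theorem exists_isLUB_pair_of_le {L : Type*} [SemilatticeInf L] [Finite L] {a b u : L}
    (ha : a ≤ u) (hb : b ≤ u) : ∃ j, IsLUB {a, b} j := by
  cases nonempty_fintype L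
  let S := Finset.univ.filter (· ∈ upperBounds ({a, b} : Set L))
  have hS : S.Nonempty := ⟨u, by simp [S, ha, hb]⟩
  exact ⟨S.inf' hS id, fun v hv => Finset.le_inf' hS id fun w hw => (Finset.mem_filter.mp hw).2 hv,
    fun v hv => S.inf'_le id (by simpa [S] using hv)⟩

namespace Blowup

variable {L : Type u} [SemilatticeInf L] [Finite L] {α : L}

theorem prop_of_le (w : Blowup L α) {p : Bool × L} (hp : p ≤ w.val) :
    ¬ α ≤ p.2 ∧ (p.1 = true → ∃ j : L, IsLUB {α, p.2} j) := by
  refine ⟨fun h => w.2.1 (h.trans hp.2), fun hp1 => ?_⟩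
  obtain ⟨j, hj⟩ := w.2.2 (by simpa [hp1, Bool.le_iff_imp] using hp.1)
  exact exists_isLUB_pair_of_le (hj.1 (by simp)) (hp.2.trans (hj.1 (by simp)))

def IicOrderIso (w : Blowup L α) : Iic w.val ≃o Iic w where
  toFun z := ⟨⟨z, prop_of_le w z.2⟩, z.2⟩
  invFun z := ⟨z.1.1, z.2⟩
  left_inv _ := rfl
  right_inv _ := rfl
  map_rel_iff' := Iff.rfl

theorem mem_buildingProd_iff [OrderBot L] (G : Set L) (w : Blowup L α) (z : Iic w.val) :
    (z : Bool × L) ∈ buildingProd {true} G ↔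
      (IicOrderIso w z : Blowup L α) ∈ {w : Blowup L α |
        (w.val.1 = false ∧ w.val.2 ∈ G ∧ w.val.2 ≠ α) ∨ w.val = (true, (⊥ : L))} := by
  obtain ⟨⟨b, y⟩, hz⟩ := z
  have hyα : y ≠ α := fun h => w.2.1 (h ▸ hz.2)
  change (b, y) ∈ buildingProd {true} G ↔ (b = false ∧ y ∈ G ∧ y ≠ α) ∨ (b, y) = (true, ⊥)
  simp only [buildingProd, image_singleton, bot_eq_false, singleton_union, mem_insert_iff,
    Prod.mk.injEq, mem_image, Bool.false_eq, exists_eq_right_right, ne_eq, hyα, not_false_eq_true,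
    and_true]
  tauto

end Blowup

theorem building_of_blowup_general {L : Type u} [SemilatticeInf L] [Fintype L] [OrderBot L]
    (G : Set L) (hG : IsBuilding G) (α : L) (hαG : α ∈ G) :
    @IsBuilding (Blowup L α) (blowupPartialOrder α) (blowupOrderBot (hG.1 α hαG))
      {w : Blowup L α |
        (w.val.1 = false ∧ w.val.2 ∈ G ∧ w.val.2 ≠ α) ∨ w.val = (true, (⊥ : L))} := by
  let _ : OrderBot (Blowup L α) := blowupOrderBot (hG.1 α hαG)
  refine ⟨?_, fun w _ => ?_⟩
  · rintro w (⟨-, hwG, -⟩ | hw) rfl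
    · exact hG.1 _ hwG rfl
    · exact Bool.false_ne_true (congrArg Prod.fst hw)
  · exact ((isBuildingAt_bool w.val.1).prod (by simp) hG.1 (hG.isBuildingAt w.val.2)).of_orderIso
      (Blowup.IicOrderIso w) (Blowup.mem_buildingProd_iff G w)

/-- blowing up a maximal element `α` of a building set `G` yields, after
replacing `α` by `[α, ⊥]`, a building set of the combinatorial blowup. -/
theorem building_of_blowup {L : Type u} [SemilatticeInf L] [Fintype L] [OrderBot L]
    (G : Set L) (hG : IsBuilding G) (α : L) (hαG : α ∈ G)
    (hαmax : ∀ g ∈ G, α ≤ g → g = α) :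
    @IsBuilding (Blowup L α) (blowupPartialOrder α) (blowupOrderBot (hG.1 α hαG))
      {w : Blowup L α |
        (w.val.1 = false ∧ w.val.2 ∈ G ∧ w.val.2 ≠ α) ∨ w.val = (true, (⊥ : L))} :=
  building_of_blowup_general G hG α hαG
end
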